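/- arXiv:0907.2101 — 2 statements merged into one kernel-verified Lean document; each statement's English description precedes it below -/
import Mathlib

section
/- For every a₀ > 0, every A > 0 and every integer M ≥ 2 there exists ε₀ ∈ (0,1) such that: for every ε ∈ (0, ε₀] and every P : ℤ → ℂ satisfying (a) |P(q)| ≤ ε for all q ∈ ℤ, (b) |P(q)| ≤ a₀/q² for all q ≠ 0, and (c) |P(q)| ≤ A · Σ_{n=2}^{M} S(1,n,|P|)(q) for all q ∈ ℤ, one has |P(q)| ≤ ε^{1 + 1/16} for all q ∈ ℤ. -/
/-!
Interpolating the two a priori bounds, `|P q| ≤ ε ^ (1/4) (a₀ / q²) ^ (3/4)`, which is summable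
in `q`, so `‖P‖₁ = O(ε ^ (1/4))`. Every convolution power of order `n ≥ 2` is bounded by
`sup |P| * ‖P‖₁ ^ (n - 1) ≤ ε ‖P‖₁`, hence the convolution bound (c) gives
`|P q| = O(ε ^ (5/4))`, which beats `ε ^ (17/16)` for small `ε`.
-/

/-- `SconvR P n` is the `n`-fold self-convolution of the real sequence `P : ℤ → ℝ`:
`SconvR P 1 = P` and `SconvR P n = P * SconvR P (n-1)` (convolution on `ℤ`). -/
noncomputable def SconvR (P : ℤ → ℝ) : ℕ → ℤ → ℝ
  | 0 => fun _ => 0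
  | 1 => P
  | (n + 2) => fun q => ∑' k : ℤ, P (q - k) * SconvR P (n + 1) k

open Filter Topology

section Convolution

variable {P : ℤ → ℝ}

lemma SconvR_succ_nonneg (hP : ∀ q, 0 ≤ P q) (n : ℕ) (q : ℤ) : 0 ≤ SconvR P (n + 1) q := by
  induction n generalizing q with
  | zero => exact hP q
  | succ n ih => exact tsum_nonneg fun k => mul_nonneg (hP _) (ih k)

lemma SconvR_succ_le (hP : ∀ q, 0 ≤ P q) (hPsum : Summable P) {ε : ℝ} (hPε : ∀ q, P q ≤ ε)
    (n : ℕ) (q : ℤ) : SconvR P (n + 1) q ≤ ε * (∑' k, P k) ^ n := by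
  induction n generalizing q with
  | zero => simpa [SconvR] using hPε q
  | succ n ih =>
    have hshift : Summable fun k => P (q - k) := (Equiv.subLeft q).summable_iff.2 hPsum
    have hle : ∀ k, P (q - k) * SconvR P (n + 1) k ≤ P (q - k) * (ε * (∑' k, P k) ^ n) :=
      fun k => mul_le_mul_of_nonneg_left (ih k) (hP _)
    have hdom : Summable fun k => P (q - k) * (ε * (∑' k, P k) ^ n) := hshift.mul_right _
    calc SconvR P (n + 2) q = ∑' k, P (q - k) * SconvR P (n + 1) k := rfl
      _ ≤ ∑' k, P (q - k) * (ε * (∑' k, P k) ^ n) :=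
        (hdom.of_nonneg_of_le (fun k => mul_nonneg (hP _) (SconvR_succ_nonneg hP n k)) hle
          ).tsum_le_tsum hle hdom
      _ = (∑' k, P (q - k)) * (ε * (∑' k, P k) ^ n) := tsum_mul_right
      _ = ε * (∑' k, P k) ^ (n + 1) := by
        rw [show (∑' k, P (q - k)) = ∑' k, P k from (Equiv.subLeft q).tsum_eq P]; ring

lemma sum_Icc_two_SconvR_le (hP : ∀ q, 0 ≤ P q) (hPsum : Summable P) {ε : ℝ}
    (hPε : ∀ q, P q ≤ ε) (hP1 : ∑' k, P k ≤ 1) (M : ℕ) (q : ℤ) :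
    ∑ n ∈ Finset.Icc 2 M, SconvR P n q ≤ M * (ε * ∑' k, P k) := by
  have hS : 0 ≤ ∑' k, P k := tsum_nonneg hP
  have hε : 0 ≤ ε := (hP 0).trans (hPε 0)
  have hterm : ∀ n ∈ Finset.Icc 2 M, SconvR P n q ≤ ε * ∑' k, P k := by
    intro n hn
    obtain ⟨m, rfl⟩ : ∃ m, n = m + 1 := ⟨n - 1, by grind⟩
    have hm : m ≠ 0 := by grind
    exact (SconvR_succ_le hP hPsum hPε m q).trans
      (mul_le_mul_of_nonneg_left (pow_le_of_le_one hS hP1 hm) hε)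
  calc ∑ n ∈ Finset.Icc 2 M, SconvR P n q ≤ (Finset.Icc 2 M).card • (ε * ∑' k, P k) :=
        Finset.sum_le_card_nsmul _ _ _ hterm
    _ ≤ M * (ε * ∑' k, P k) := by
        rw [nsmul_eq_mul]
        gcongr
        exact_mod_cast (Nat.card_Icc 2 M).trans_le (by omega)

end Convolution

section Summability

lemma le_rpow_mul_rpow_of_le_of_le {x a b t : ℝ} (hx : 0 ≤ x) (ha : x ≤ a) (hb : x ≤ b)
    (ht₀ : 0 ≤ t) (ht₁ : t ≤ 1) : x ≤ a ^ (1 - t) * b ^ t := by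
  calc x = x ^ (1 - t) * x ^ t := by
        rw [← Real.rpow_add' hx (by norm_num), sub_add_cancel, Real.rpow_one]
    _ ≤ a ^ (1 - t) * b ^ t := by
        gcongr
        exact Real.rpow_nonneg (hx.trans ha) _

lemma div_sq_rpow {a : ℝ} (ha : 0 ≤ a) (x t : ℝ) : (a / x ^ 2) ^ t = a ^ t * |x| ^ (-(2 * t)) := by
  rw [← sq_abs, ← Real.rpow_natCast, Real.div_rpow ha (by positivity),
    ← Real.rpow_mul (abs_nonneg x), Real.rpow_neg (abs_nonneg x), div_eq_mul_inv]
  norm_num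

/-- Since `|0| ^ (-s) = 0` in Lean, the value at `q = 0` is bounded separately by `b`. -/
lemma summable_and_tsum_le_of_le_mul_abs_rpow {h : ℤ → ℝ} {b c s : ℝ} (hs : 1 < s)
    (h₀ : ∀ q, 0 ≤ h q) (hb : h 0 ≤ b) (hc : ∀ q ≠ 0, h q ≤ c * |(q : ℝ)| ^ (-s)) :
    Summable h ∧ ∑' q, h q ≤ b + c * ∑' q : ℤ, |(q : ℝ)| ^ (-s) := by
  set g : ℤ → ℝ := fun q => c * |(q : ℝ)| ^ (-s) + if q = 0 then b else 0
  have hpow := Real.summable_abs_int_rpow hs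
  have hg : HasSum g (c * ∑' q : ℤ, |(q : ℝ)| ^ (-s) + b) :=
    (hpow.hasSum.mul_left c).add (hasSum_ite_eq 0 b)
  have hhg : ∀ q, h q ≤ g q := by
    intro q
    rcases eq_or_ne q 0 with rfl | hq
    · simpa [g, Real.zero_rpow (neg_ne_zero.2 (by linarith : s ≠ 0))] using hb
    · simpa [g, hq] using hc q hq
  have hh : Summable h := hg.summable.of_nonneg_of_le h₀ hhg
  exact ⟨hh, (hh.tsum_le_tsum hhg hg.summable).trans (by rw [hg.tsum_eq, add_comm])⟩

lemma summable_and_tsum_le_of_le_of_le_div_sq {h : ℤ → ℝ} {a₀ ε : ℝ} (ha₀ : 0 ≤ a₀)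
    (hε : ε ≤ 1) (h₀ : ∀ q, 0 ≤ h q) (hε_bound : ∀ q, h q ≤ ε)
    (hdecay : ∀ q : ℤ, q ≠ 0 → h q ≤ a₀ / (q : ℝ) ^ 2) :
    Summable h ∧ ∑' q, h q ≤
      (a₀ ^ ((3 : ℝ) / 4) * ∑' q : ℤ, |(q : ℝ)| ^ (-(3 / 2 : ℝ)) + 1) * ε ^ ((1 : ℝ) / 4) := by
  have hε₀ : 0 ≤ ε := (h₀ 0).trans (hε_bound 0)
  have hinterp : ∀ q : ℤ, q ≠ 0 →
      h q ≤ ε ^ ((1 : ℝ) / 4) * a₀ ^ ((3 : ℝ) / 4) * |(q : ℝ)| ^ (-(3 / 2 : ℝ)) := by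
    intro q hq
    have := le_rpow_mul_rpow_of_le_of_le (h₀ q) (hε_bound q) (hdecay q hq)
      (t := 3 / 4) (by norm_num) (by norm_num)
    rw [div_sq_rpow ha₀] at this
    convert this using 1
    norm_num [mul_assoc]
  obtain ⟨hsum, hle⟩ :=
    summable_and_tsum_le_of_le_mul_abs_rpow (by norm_num) h₀ (hε_bound 0) hinterp
  have hε_le : ε ≤ ε ^ ((1 : ℝ) / 4) := by
    simpa using
      Real.rpow_le_rpow_of_exponent_ge' hε₀ hε (by norm_num) (by norm_num : (1 : ℝ) / 4 ≤ 1)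
  exact ⟨hsum, by linarith⟩

end Summability

section SmallParameter

lemma eventually_mul_rpow_le_one (K : ℝ) {s : ℝ} (hs : 0 < s) :
    ∀ᶠ ε in 𝓝[>] (0 : ℝ), K * ε ^ s ≤ 1 := by
  have hlim : Tendsto (fun ε : ℝ => K * ε ^ s) (𝓝 0) (𝓝 0) := by
    simpa [Real.zero_rpow hs.ne'] using
      ((Real.continuousAt_rpow_const 0 s (Or.inr hs.le)).const_mul K).tendsto
  exact nhdsWithin_le_nhds (hlim.eventually (ge_mem_nhds one_pos))

lemma exists_Ioo_zero_one_forall_Ioc_of_eventually {p : ℝ → Prop}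
    (hp : ∀ᶠ ε in 𝓝[>] (0 : ℝ), p ε) :
    ∃ ε₀ ∈ Set.Ioo (0 : ℝ) 1, ∀ ε ∈ Set.Ioc (0 : ℝ) ε₀, p ε := by
  obtain ⟨u, hu, hsub⟩ := mem_nhdsGT_iff_exists_Ioc_subset.1 hp
  refine ⟨min u (1 / 2), ⟨lt_min hu (by norm_num), by norm_num⟩, fun ε hε => hsub ?_⟩
  exact ⟨hε.1, hε.2.trans (min_le_left _ _)⟩

end SmallParameter

theorem stmt8_general (a₀ A : ℝ) (ha₀ : 0 < a₀) (hA : 0 < A) (M : ℕ) :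
    ∃ ε₀ ∈ Set.Ioo (0 : ℝ) 1,
      ∀ ε : ℝ, ε ∈ Set.Ioc (0 : ℝ) ε₀ →
      ∀ P : ℤ → ℂ,
        (∀ q : ℤ, ‖P q‖ ≤ ε) →
        (∀ q : ℤ, q ≠ 0 → ‖P q‖ ≤ a₀ / (q : ℝ) ^ 2) →
        (∀ q : ℤ, ‖P q‖ ≤ A * ∑ n ∈ Finset.Icc 2 M, SconvR (fun j : ℤ => ‖P j‖) n q) →
        ∀ q : ℤ, ‖P q‖ ≤ ε ^ ((1 : ℝ) + 1 / 16) := by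
  set D := a₀ ^ ((3 : ℝ) / 4) * ∑' q : ℤ, |(q : ℝ)| ^ (-(3 / 2 : ℝ)) + 1
  obtain ⟨ε₀, hε₀, hsmall⟩ := exists_Ioo_zero_one_forall_Ioc_of_eventually
    ((eventually_mul_rpow_le_one D (s := 1 / 4) (by norm_num)).and
      (eventually_mul_rpow_le_one (A * M * D) (s := 3 / 16) (by norm_num)))
  refine ⟨ε₀, hε₀, fun ε hε P hPε hdecay hconv q => ?_⟩
  obtain ⟨hnorm_small, hgain⟩ := hsmall ε hε
  obtain ⟨hsum, hnorm⟩ := summable_and_tsum_le_of_le_of_le_div_sq ha₀.le (hε.2.trans hε₀.2.le)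
    (fun q => norm_nonneg (P q)) hPε hdecay
  calc ‖P q‖ ≤ A * (M * (ε * ∑' k, ‖P k‖)) :=
        (hconv q).trans (mul_le_mul_of_nonneg_left (sum_Icc_two_SconvR_le
          (fun q => norm_nonneg (P q)) hsum hPε (hnorm.trans hnorm_small) M q) hA.le)
    _ ≤ A * (M * (ε * (D * ε ^ ((1 : ℝ) / 4)))) := by gcongr; exact hε.1.le
    _ = (A * M * D * ε ^ ((3 : ℝ) / 16)) * ε ^ ((1 : ℝ) + 1 / 16) := by
        have hsplit : ε ^ ((3 : ℝ) / 16) * ε ^ ((1 : ℝ) + 1 / 16) = ε * ε ^ ((1 : ℝ) / 4) := by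
          rw [← Real.rpow_add hε.1, ← Real.rpow_one_add' hε.1.le (by norm_num)]
          norm_num
        linear_combination (-(A * M * D)) * hsplit
    _ ≤ ε ^ ((1 : ℝ) + 1 / 16) := mul_le_of_le_one_left (Real.rpow_nonneg hε.1.le _) hgain

theorem stmt8 (a₀ A : ℝ) (ha₀ : 0 < a₀) (hA : 0 < A) (M : ℕ) (hM : 2 ≤ M) :
    ∃ ε₀ ∈ Set.Ioo (0 : ℝ) 1,
      ∀ ε : ℝ, ε ∈ Set.Ioc (0 : ℝ) ε₀ →
      ∀ P : ℤ → ℂ,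
        (∀ q : ℤ, ‖P q‖ ≤ ε) →
        (∀ q : ℤ, q ≠ 0 → ‖P q‖ ≤ a₀ / (q : ℝ) ^ 2) →
        (∀ q : ℤ, ‖P q‖ ≤ A * ∑ n ∈ Finset.Icc 2 M, SconvR (fun j : ℤ => ‖P j‖) n q) →
        ∀ q : ℤ, ‖P q‖ ≤ ε ^ ((1 : ℝ) + 1 / 16) :=
  stmt8_general a₀ A ha₀ hA M
end

section
/- For every a₀ > 0, every c > 0, every G̃ > 0 and every integer M ≥ 2 there exist ε₀ ∈ (0,1) and c₀ > 0 such that the following holds. Let e be an integer with e ≥ 1, let Ĵ : ℤ → ℂ satisfy |Ĵ(q)| ≥ c for all q ∉ {e, −e}, for each 2 ≤ n ≤ M let g_n : ℤ^n → ℂ satisfy |g_n| ≤ G̃ everywhere, and let P : ℤ → ℂ satisfy P(−q) = conj(P(q)) for all q ∈ ℤ, |P(q)| ≤ ε₀ for all q ∈ ℤ, |P(q)| ≤ a₀/q² for all q ≠ 0, and the harmonic-balance equation Ĵ(q)·P(q) = Σ_{n=2}^{M} S(g_n,n,P)(q) for all q ∉ {e, −e}. Then either P = 0, or the following all hold: P(e)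 ≠ 0, sup_{q∈ℤ} |P(q)| = |P(e)|, and |P(q)| ≤ c₀·|P(e)|² for every q ∉ {e, −e}. -/
/-- For `q : ℤ` and `k = (k₁, …, k_m) : Fin m → ℤ`, `diffs q k i` is the `i`-th successive
difference in the chain `q, k₁, k₂, …, k_m, 0`; i.e. `diffs q k 0 = q - k₁`,
`diffs q k i = kᵢ - k_{i+1}` for `1 ≤ i ≤ m - 1`, and `diffs q k m = k_m`. -/
def diffs (q : ℤ) {m : ℕ} (k : Fin m → ℤ) (i : ℕ) : ℤ :=
  (q :: (List.ofFn k ++ [0])).getD i 0 - (q :: (List.ofFn k ++ [0])).getD (i + 1) 0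

/-- `Sg n g P q = Σ_{k₁,…,k_{n-1} ∈ ℤ} g(q,k₁,…,k_{n-1}) · P(q-k₁)·P(k₁-k₂)⋯P(k_{n-1})`,
the convolution-type multiple series with kernel `g`. -/
noncomputable def Sg (n : ℕ) (g : (Fin n → ℤ) → ℂ) (P : ℤ → ℂ) (q : ℤ) : ℂ :=
  ∑' k : Fin (n - 1) → ℤ,
    g (fun i : Fin n => (q :: List.ofFn k).getD (i : ℕ) 0) *
      ∏ i ∈ Finset.range n, P (diffs q k i)

/-!
Put `f = ‖P‖`, `s = sup f` and let `t` be the supremum of `f` off `±e`. A small sup norm together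
with the uniform decay `a₀ / q²` makes `A = ∑ f` small. Each `Sg n (g n) P q` is dominated by `G̃`
times the `n`-fold convolution power of `f`; as `A ≤ 1` this is at most `f ⋆ f`, and
splitting that sum at `±e` bounds it by `2 s² + t A`. Off resonance the balance equation then
gives `t ≤ L (2 s² + t A)` with `L = G̃ M / c`, hence `t ≤ 4 L s²`, which is `≤ s / 2` once
`s ≤ 1 / (8 L)`. So the supremum of `f` is attained at `±e`, and `‖P q‖ ≤ 4 L ‖P e‖²` off `±e`.
-/

lemma diffs_cons_zero (q d : ℤ) {m : ℕ} (k : Fin m → ℤ) :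
    diffs q (Fin.cons d k) 0 = q - d := by
  simp [diffs, List.ofFn_succ]

lemma diffs_cons_succ (q d : ℤ) {m : ℕ} (k : Fin m → ℤ) (i : ℕ) :
    diffs q (Fin.cons d k) (i + 1) = diffs d k i := by
  simp [diffs, List.ofFn_succ]

lemma prod_range_diffs_cons {β : Type*} [CommMonoid β] (F : ℤ → β) (q d : ℤ) {m : ℕ}
    (k : Fin m → ℤ) :
    ∏ i ∈ Finset.range (m + 1 + 1), F (diffs q (Fin.cons d k) i) =
      F (q - d) * ∏ i ∈ Finset.range (m + 1), F (diffs d k i) := by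
  rw [Finset.prod_range_succ', diffs_cons_zero, mul_comm]
  simp only [diffs_cons_succ]

/-- The `(m + 1)`-fold convolution power of `f`, so that `iterConv f 0 = f`. -/
noncomputable def iterConv (f : ℤ → ℝ) : ℕ → ℤ → ℝ
  | 0 => f
  | m + 1 => fun q => ∑' d, f (q - d) * iterConv f m d

section IterConv

variable {f : ℤ → ℝ}

lemma hasSum_comp_sub (hfs : Summable f) (q : ℤ) :
    HasSum (fun d => f (q - d)) (∑' d, f d) :=
  (Equiv.subLeft q).hasSum_iff.mpr hfs.hasSum

lemma summable_comp_sub_mul (hf0 : ∀ d, 0 ≤ f d) (hfs : Summable f) {h : ℤ → ℝ}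
    (hh0 : ∀ d, 0 ≤ h d) {K : ℝ} (hK : ∀ d, h d ≤ K) (q : ℤ) :
    Summable fun d => f (q - d) * h d :=
  ((hasSum_comp_sub hfs q).summable.mul_right K).of_nonneg_of_le
    (fun d => mul_nonneg (hf0 _) (hh0 d)) fun d => mul_le_mul_of_nonneg_left (hK d) (hf0 _)

lemma tsum_comp_sub_mul_le (hf0 : ∀ d, 0 ≤ f d) (hfs : Summable f) {h : ℤ → ℝ}
    (hh0 : ∀ d, 0 ≤ h d) {K : ℝ} (hK : ∀ d, h d ≤ K) (q : ℤ) :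
    ∑' d, f (q - d) * h d ≤ (∑' d, f d) * K :=
  hasSum_le (fun d => mul_le_mul_of_nonneg_left (hK d) (hf0 _))
    (summable_comp_sub_mul hf0 hfs hh0 hK q).hasSum ((hasSum_comp_sub hfs q).mul_right K)

lemma iterConv_nonneg (hf0 : ∀ d, 0 ≤ f d) (m : ℕ) (q : ℤ) : 0 ≤ iterConv f m q := by
  induction m generalizing q with
  | zero => exact hf0 q
  | succ m ih => exact tsum_nonneg fun d => mul_nonneg (hf0 _) (ih d)

lemma iterConv_succ_le (hf0 : ∀ d, 0 ≤ f d) (hfs : Summable f) {m : ℕ} {K : ℝ}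
    (hK : ∀ d, iterConv f m d ≤ K) (q : ℤ) : iterConv f (m + 1) q ≤ (∑' d, f d) * K :=
  tsum_comp_sub_mul_le hf0 hfs (iterConv_nonneg hf0 m) hK q

lemma iterConv_le_pow (hf0 : ∀ d, 0 ≤ f d) (hfs : Summable f) (m : ℕ) (q : ℤ) :
    iterConv f m q ≤ (∑' d, f d) ^ (m + 1) := by
  induction m generalizing q with
  | zero => simpa [iterConv] using hfs.le_tsum q fun j _ => hf0 j
  | succ m ih => exact (iterConv_succ_le hf0 hfs ih q).trans_eq (pow_succ' _ _).symm

lemma summable_comp_sub_mul_iterConv (hf0 : ∀ d, 0 ≤ f d) (hfs : Summable f) (m : ℕ)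
    (q : ℤ) : Summable fun d => f (q - d) * iterConv f m d :=
  summable_comp_sub_mul hf0 hfs (iterConv_nonneg hf0 m) (iterConv_le_pow hf0 hfs m) q

lemma iterConv_le_of_iterConv_one_le (hf0 : ∀ d, 0 ≤ f d) (hfs : Summable f)
    (hA : ∑' d, f d ≤ 1) {B : ℝ} (hB : ∀ q, iterConv f 1 q ≤ B) {m : ℕ} (hm : 1 ≤ m)
    (q : ℤ) : iterConv f m q ≤ B := by
  have hB0 : 0 ≤ B := (iterConv_nonneg hf0 1 0).trans (hB 0)
  induction m, hm using Nat.le_induction generalizing q with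
  | base => exact hB q
  | succ m _ ih => exact (iterConv_succ_le hf0 hfs ih q).trans (mul_le_of_le_one_left hB0 hA)

lemma hasSum_prod_diffs (hf0 : ∀ d, 0 ≤ f d) (hfs : Summable f) (m : ℕ) (q : ℤ) :
    HasSum (fun k : Fin m → ℤ => ∏ i ∈ Finset.range (m + 1), f (diffs q k i))
      (iterConv f m q) := by
  induction m generalizing q with
  | zero =>
    convert hasSum_single (default : Fin 0 → ℤ) fun k hk => absurd (Subsingleton.elim k _) hk
    simp [diffs, iterConv]
  | succ m ih =>
    rw [← (Fin.consEquiv fun _ => ℤ).hasSum_iff]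
    have hfiber : ∀ d,
        HasSum (fun k => ∏ i ∈ Finset.range (m + 1 + 1), f (diffs q (Fin.cons d k) i))
          (f (q - d) * iterConv f m d) := fun d => by
      refine ((ih d).mul_left (f (q - d))).congr_fun fun k => ?_
      exact prod_range_diffs_cons f q d k
    have hsum : Summable fun p : ℤ × (Fin m → ℤ) =>
        ∏ i ∈ Finset.range (m + 1 + 1), f (diffs q (Fin.cons p.1 p.2) i) :=
      (summable_prod_of_nonneg fun p => Finset.prod_nonneg fun i _ => hf0 _).2
        ⟨fun d => (hfiber d).summable,
          (summable_comp_sub_mul_iterConv hf0 hfs m q).congr fun d => (hfiber d).tsum_eq.symm⟩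
    have htsum := (hsum.hasSum.prod_fiberwise hfiber).unique
      (summable_comp_sub_mul_iterConv hf0 hfs m q).hasSum
    change HasSum _ (∑' d, f (q - d) * iterConv f m d)
    rw [← htsum]
    exact hsum.hasSum

lemma iterConv_one_le (hf0 : ∀ d, 0 ≤ f d) (hfs : Summable f) (S : Finset ℤ) {s t : ℝ}
    (hs : ∀ d, f d ≤ s) (ht : ∀ d ∉ S, f d ≤ t) (q : ℤ) :
    iterConv f 1 q ≤ S.card * s ^ 2 + t * ∑' d, f d := by
  obtain ⟨d₀, hd₀⟩ := Infinite.exists_notMem_finset S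
  have ht0 : 0 ≤ t := (hf0 d₀).trans (ht d₀ hd₀)
  have hpoint : ∀ d, f (q - d) * f d ≤ (if d ∈ S then s ^ 2 else 0) + t * f (q - d) := by
    intro d
    split_ifs with hd
    · have := mul_le_mul (hs (q - d)) (hs d) (hf0 d) ((hf0 d).trans (hs d))
      nlinarith [mul_nonneg ht0 (hf0 (q - d))]
    · rw [zero_add, mul_comm t]
      exact mul_le_mul_of_nonneg_left (ht d hd) (hf0 _)
  have hfinite : HasSum (fun d => if d ∈ S then s ^ 2 else 0) (S.card * s ^ 2) := by
    have : HasSum (fun d => if d ∈ S then s ^ 2 else 0) (∑ d ∈ S, if d ∈ S then s ^ 2 else 0) :=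
      hasSum_sum_of_ne_finset_zero fun d hd => if_neg hd
    simpa using this
  exact hasSum_le hpoint (summable_comp_sub_mul_iterConv hf0 hfs 0 q).hasSum
    (hfinite.add ((hasSum_comp_sub hfs q).mul_left t))

end IterConv

lemma norm_Sg_le {P : ℤ → ℂ} (hP : Summable fun q => ‖P q‖) {m : ℕ}
    {g : (Fin (m + 1) → ℤ) → ℂ} {G : ℝ} (hg : ∀ v, ‖g v‖ ≤ G) (q : ℤ) :
    ‖Sg (m + 1) g P q‖ ≤ G * iterConv (fun d => ‖P d‖) m q := by
  refine tsum_of_norm_bounded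
    ((hasSum_prod_diffs (fun d => norm_nonneg (P d)) hP m q).mul_left G) fun k => ?_
  rw [norm_mul, norm_prod]
  exact mul_le_mul_of_nonneg_right (hg _) (Finset.prod_nonneg fun _ _ => norm_nonneg _)

lemma norm_sum_Sg_le {P : ℤ → ℂ} (hP : Summable fun q => ‖P q‖) (hA : ∑' q, ‖P q‖ ≤ 1)
    {M : ℕ} {g : (n : ℕ) → (Fin n → ℤ) → ℂ} {G : ℝ} (hG : 0 ≤ G)
    (hg : ∀ n, 2 ≤ n → n ≤ M → ∀ v, ‖g n v‖ ≤ G) {B : ℝ}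
    (hB : ∀ q, iterConv (fun d => ‖P d‖) 1 q ≤ B) (q : ℤ) :
    ‖∑ n ∈ Finset.Icc 2 M, Sg n (g n) P q‖ ≤ M * (G * B) := by
  have hterm : ∀ n ∈ Finset.Icc 2 M, ‖Sg n (g n) P q‖ ≤ G * B := by
    intro n hn
    obtain ⟨h2n, hnM⟩ := Finset.mem_Icc.mp hn
    obtain ⟨m, rfl⟩ : ∃ m, n = m + 1 := ⟨n - 1, by omega⟩
    exact (norm_Sg_le hP (hg _ h2n hnM) q).trans <| mul_le_mul_of_nonneg_left
      (iterConv_le_of_iterConv_one_le (fun d => norm_nonneg _) hP hA hB (by omega) q) hG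
  have hB0 : 0 ≤ B := (iterConv_nonneg (fun d => norm_nonneg (P d)) 1 0).trans (hB 0)
  calc ‖∑ n ∈ Finset.Icc 2 M, Sg n (g n) P q‖ ≤ (Finset.Icc 2 M).card • (G * B) :=
        (norm_sum_le _ _).trans (Finset.sum_le_card_nsmul _ _ _ hterm)
    _ ≤ M * (G * B) := by
        rw [nsmul_eq_mul, Nat.card_Icc]
        gcongr
        exact_mod_cast (by omega : M + 1 - 2 ≤ M)

lemma tsum_le_of_le_of_le_div_sq {F : ℕ → ℝ} {ε a : ℝ} (ha : 0 ≤ a) (hF0 : ∀ n, 0 ≤ F n)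
    (hFε : ∀ n, F n ≤ ε) (hFa : ∀ n, n ≠ 0 → F n ≤ a / (n : ℝ) ^ 2) (N : ℕ) :
    ∑' n, F n ≤ (N + 1) * ε + 2 * a / (N + 1) := by
  refine Real.tsum_le_of_sum_le (fun n => hF0 n) fun u => ?_
  obtain ⟨R, hR⟩ := u.exists_nat_subset_range
  have hsplit : u ⊆ Finset.range (N + 1) ∪ Finset.Ioo N R := fun n hn => by
    have := Finset.mem_range.mp (hR hn)
    simp only [Finset.mem_union, Finset.mem_range, Finset.mem_Ioo]
    omega
  have hdisj : Disjoint (Finset.range (N + 1)) (Finset.Ioo N R) :=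
    Finset.disjoint_left.mpr fun n h1 h2 => by
      simp only [Finset.mem_range, Finset.mem_Ioo] at h1 h2
      omega
  have hhead : ∑ n ∈ Finset.range (N + 1), F n ≤ (N + 1) * ε := by
    refine (Finset.sum_le_card_nsmul _ F ε fun n _ => hFε n).trans_eq ?_
    simp
  have htail : ∑ n ∈ Finset.Ioo N R, F n ≤ 2 * a / (N + 1) :=
    calc ∑ n ∈ Finset.Ioo N R, F n ≤ ∑ n ∈ Finset.Ioo N R, a * ((n : ℝ) ^ 2)⁻¹ :=
          Finset.sum_le_sum fun n hn =>
            (hFa n (by simp only [Finset.mem_Ioo] at hn; omega)).trans_eq (div_eq_mul_inv _ _)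
      _ ≤ a * (2 / (N + 1)) := by
          rw [← Finset.mul_sum]
          exact mul_le_mul_of_nonneg_left (sum_Ioo_inv_sq_le N R) ha
      _ = 2 * a / (N + 1) := by ring
  calc ∑ n ∈ u, F n ≤ ∑ n ∈ Finset.range (N + 1) ∪ Finset.Ioo N R, F n :=
        Finset.sum_le_sum_of_subset_of_nonneg hsplit fun n _ _ => hF0 n
    _ = ∑ n ∈ Finset.range (N + 1), F n + ∑ n ∈ Finset.Ioo N R, F n := Finset.sum_union hdisj
    _ ≤ (N + 1) * ε + 2 * a / (N + 1) := add_le_add hhead htail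

lemma exists_summable_tsum_le_of_le_div_sq {a δ : ℝ} (ha : 0 ≤ a) (hδ : 0 < δ) :
    ∃ ε > 0, ∀ f : ℤ → ℝ, (∀ q, 0 ≤ f q) → (∀ q, f q ≤ ε) →
      (∀ q : ℤ, q ≠ 0 → f q ≤ a / (q : ℝ) ^ 2) → Summable f ∧ ∑' q, f q ≤ δ := by
  set N : ℕ := ⌈8 * a / δ⌉₊
  have hN : 8 * a ≤ δ * (N + 1) := by
    have := Nat.le_ceil (8 * a / δ)
    rw [div_le_iff₀ hδ] at this
    nlinarith
  refine ⟨δ / (4 * (N + 1)), by positivity, fun f hf0 hfε hfa => ?_⟩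
  have hfs : Summable f := by
    refine ((Real.summable_one_div_int_pow.mpr one_lt_two).mul_left a).of_norm_bounded_eventually ?_
    filter_upwards [Filter.eventually_cofinite_ne 0] with q hq
    rw [Real.norm_of_nonneg (hf0 q), mul_one_div]
    exact hfa q hq
  refine ⟨hfs, ?_⟩
  have hpairs : ∑' n : ℕ, (f n + f (-n)) ≤
      (N + 1) * (2 * (δ / (4 * (N + 1)))) + 2 * (2 * a) / (N + 1) := by
    refine tsum_le_of_le_of_le_div_sq (by positivity) (fun n => add_nonneg (hf0 _) (hf0 _))
      (fun n => by linarith [hfε n, hfε (-n)]) (fun n hn => ?_) N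
    have hpos := hfa n (by exact_mod_cast hn)
    have hneg := hfa (-n) (by omega)
    push_cast at hpos hneg
    rw [neg_sq] at hneg
    rw [mul_div_assoc]
    linarith
  have hhead : (N + 1 : ℝ) * (2 * (δ / (4 * (N + 1)))) = δ / 2 := by
    field_simp
    ring
  have htail : 2 * (2 * a) / (N + 1) ≤ δ / 2 := by
    rw [div_le_iff₀ (by positivity)]
    linarith
  linarith [tsum_nat_add_neg hfs, hf0 0]

lemma norm_le_of_harmonicBalance {c G : ℝ} (hc : 0 < c) (hG : 0 ≤ G) {M : ℕ} {e : ℤ}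
    {J : ℤ → ℂ} (hJ : ∀ q, q ≠ e → q ≠ -e → c ≤ ‖J q‖) {g : (n : ℕ) → (Fin n → ℤ) → ℂ}
    (hg : ∀ n, 2 ≤ n → n ≤ M → ∀ v, ‖g n v‖ ≤ G) {P : ℤ → ℂ}
    (hbal : ∀ q, q ≠ e → q ≠ -e → J q * P q = ∑ n ∈ Finset.Icc 2 M, Sg n (g n) P q)
    (hP : Summable fun q => ‖P q‖) (hA : ∑' q, ‖P q‖ ≤ 1) {s t : ℝ} (hs : ∀ q, ‖P q‖ ≤ s)
    (ht : ∀ q, q ≠ e → q ≠ -e → ‖P q‖ ≤ t) {q : ℤ} (hqe : q ≠ e) (hqe' : q ≠ -e) :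
    ‖P q‖ ≤ G * M / c * (2 * s ^ 2 + t * ∑' q, ‖P q‖) := by
  have hf0 : ∀ q, 0 ≤ ‖P q‖ := fun q => norm_nonneg _
  have hB : ∀ q, iterConv (fun q => ‖P q‖) 1 q ≤ 2 * s ^ 2 + t * ∑' q, ‖P q‖ := fun q =>
    (iterConv_one_le hf0 hP {e, -e} hs (fun d hd => by
      simp only [Finset.mem_insert, Finset.mem_singleton, not_or] at hd
      exact ht d hd.1 hd.2) q).trans (by gcongr; exact_mod_cast Finset.card_le_two)
  have hbound := norm_sum_Sg_le hP hA hG hg hB q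
  rw [← hbal q hqe hqe', norm_mul] at hbound
  rw [div_mul_eq_mul_div, le_div_iff₀ hc]
  nlinarith [hJ q hqe hqe', hf0 q]

lemma ciSup_eq_of_le_off_pair {ι : Type*} {f : ι → ℝ} (hbdd : BddAbove (Set.range f)) {a b : ι}
    (hab : f b = f a) {t : ℝ} (ht : ∀ i, i ≠ a → i ≠ b → f i ≤ t) (hlt : t < ⨆ i, f i) :
    ⨆ i, f i = f a := by
  have : Nonempty ι := ⟨a⟩
  refine le_antisymm ?_ (le_ciSup hbdd a)
  have hmax : ⨆ i, f i ≤ max (f a) t := ciSup_le fun i => by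
    by_cases ha : i = a
    · exact ha ▸ le_max_left _ _
    by_cases hb : i = b
    · exact hb ▸ hab ▸ le_max_left _ _
    exact (ht i ha hb).trans (le_max_right _ _)
  exact (le_max_iff.mp hmax).resolve_right hlt.not_ge

lemma ciSup_eq_and_le_sq_of_le_off_pair {f : ℤ → ℝ} (hf0 : ∀ q, 0 ≤ f q) {e : ℤ}
    (hsym : f (-e) = f e) {L A : ℝ} (hL : 0 < L) (hLA : L * A ≤ 1 / 2)
    (hfL : ∀ q, f q ≤ 1 / (8 * L)) (hpos : 0 < ⨆ q, f q)
    (hoff : ∀ t, (∀ q, q ≠ e → q ≠ -e → f q ≤ t) →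
      ∀ q, q ≠ e → q ≠ -e → f q ≤ L * (2 * (⨆ q, f q) ^ 2 + t * A)) :
    (⨆ q, f q) = f e ∧ ∀ q, q ≠ e → q ≠ -e → f q ≤ 4 * L * f e ^ 2 := by
  have hbdd : BddAbove (Set.range f) := ⟨1 / (8 * L), Set.forall_mem_range.2 hfL⟩
  set s : ℝ := ⨆ q, f q
  obtain ⟨q₀, hq₀⟩ := Infinite.exists_notMem_finset ({e, -e} : Finset ℤ)
  simp only [Finset.mem_insert, Finset.mem_singleton, not_or] at hq₀
  have : Nonempty {q : ℤ // q ≠ e ∧ q ≠ -e} := ⟨⟨q₀, hq₀⟩⟩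
  set t : ℝ := ⨆ q : {q : ℤ // q ≠ e ∧ q ≠ -e}, f q
  have ht : ∀ q, q ≠ e → q ≠ -e → f q ≤ t := fun q h1 h2 =>
    le_ciSup (f := fun q : {q : ℤ // q ≠ e ∧ q ≠ -e} => f q)
      (hbdd.mono (Set.range_comp_subset_range Subtype.val f)) ⟨q, h1, h2⟩
  have ht0 : 0 ≤ t := (hf0 q₀).trans (ht q₀ hq₀.1 hq₀.2)
  have htL : t ≤ 4 * L * s ^ 2 := by
    have := ciSup_le fun q : {q : ℤ // q ≠ e ∧ q ≠ -e} => hoff t ht q q.2.1 q.2.2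
    nlinarith
  have hts : t < s := by
    have hsL : s * (8 * L) ≤ 1 := (le_div_iff₀ (by positivity)).mp (ciSup_le hfL)
    nlinarith
  have hse : s = f e := ciSup_eq_of_le_off_pair hbdd hsym ht hts
  exact ⟨hse, fun q h1 h2 => (ht q h1 h2).trans (htL.trans_eq (by rw [hse]))⟩

theorem stmt10 (a₀ c Gb : ℝ) (ha₀ : 0 < a₀) (hc : 0 < c) (hGb : 0 < Gb)
    (M : ℕ) (hM : 2 ≤ M) :
    ∃ ε₀ ∈ Set.Ioo (0 : ℝ) 1, ∃ c₀ : ℝ, 0 < c₀ ∧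
      ∀ e : ℤ, 1 ≤ e →
      ∀ J : ℤ → ℂ, (∀ q : ℤ, q ≠ e → q ≠ -e → c ≤ ‖J q‖) →
      ∀ g : (n : ℕ) → (Fin n → ℤ) → ℂ,
        (∀ n : ℕ, 2 ≤ n → n ≤ M → ∀ v : Fin n → ℤ, ‖g n v‖ ≤ Gb) →
      ∀ P : ℤ → ℂ,
        (∀ q : ℤ, P (-q) = starRingEnd ℂ (P q)) →
        (∀ q : ℤ, ‖P q‖ ≤ ε₀) →
        (∀ q : ℤ, q ≠ 0 → ‖P q‖ ≤ a₀ / (q : ℝ) ^ 2) →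
        (∀ q : ℤ, q ≠ e → q ≠ -e → J q * P q = ∑ n ∈ Finset.Icc 2 M, Sg n (g n) P q) →
        P = 0 ∨
          (P e ≠ 0 ∧ (⨆ q : ℤ, ‖P q‖) = ‖P e‖ ∧
            ∀ q : ℤ, q ≠ e → q ≠ -e → ‖P q‖ ≤ c₀ * ‖P e‖ ^ 2) := by
  have hM0 : (0 : ℝ) < M := by exact_mod_cast (by omega : 0 < M)
  set L : ℝ := Gb * M / c
  have hL0 : 0 < L := by positivity
  obtain ⟨ε, hε0, hsmall⟩ :=
    exists_summable_tsum_le_of_le_div_sq ha₀.le (δ := min 1 (1 / (2 * L))) (by positivity)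
  set ε₀ : ℝ := min ε (min (1 / 2) (1 / (8 * L)))
  have hε₀half : ε₀ ≤ 1 / 2 := (min_le_right _ _).trans (min_le_left _ _)
  refine ⟨ε₀, ⟨by positivity, by linarith⟩, 4 * L, by positivity, ?_⟩
  intro e _ J hJ g hg P hPsym hPε hPd hbal
  obtain ⟨hP, hA⟩ := hsmall (fun q => ‖P q‖) (fun q => norm_nonneg _)
    (fun q => (hPε q).trans (min_le_left _ _)) hPd
  have hLA : L * ∑' q, ‖P q‖ ≤ 1 / 2 :=
    calc L * ∑' q, ‖P q‖ ≤ L * (1 / (2 * L)) := by gcongr; exact hA.trans (min_le_right _ _)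
      _ = 1 / 2 := by field_simp
  rcases eq_or_ne P 0 with hP0 | hP0
  · exact Or.inl hP0
  have hbdd : BddAbove (Set.range fun q => ‖P q‖) := ⟨ε₀, Set.forall_mem_range.2 hPε⟩
  have hpos : 0 < ⨆ q, ‖P q‖ := by
    obtain ⟨q, hq⟩ := Function.ne_iff.mp hP0
    exact (norm_pos_iff.mpr hq).trans_le (le_ciSup hbdd q)
  obtain ⟨hsup, hoff⟩ := ciSup_eq_and_le_sq_of_le_off_pair (fun q => norm_nonneg _)
    (by simp [hPsym]) hL0 hLA (fun q => (hPε q).trans ((min_le_right _ _).trans (min_le_right _ _)))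
    hpos fun t ht q hq hq' => norm_le_of_harmonicBalance hc hGb.le hJ hg hbal hP
      (hA.trans (min_le_left _ _)) (le_ciSup hbdd) ht hq hq'
  exact Or.inr ⟨norm_pos_iff.mp (hsup ▸ hpos), hsup, hoff⟩
end
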